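/- arXiv:1712.01753 — 8 statements merged into one kernel-verified Lean document; each statement's English description precedes it below -/
import Mathlib

section
/- Let R be a commutative semilocal zero-dimensional ring with Jacobson radical J. If for every sequence {I_i} of finitely generated ideals contained in J there exists k > 0 with I_1 I_2 ··· I_k = 0, then the nilradical of the total quotient ring of the polynomial ring S = R[X_1,...,X_n] is T-nilpotent. -/
abbrev TotalQuotient (S : Type*) [CommRing S] := Localization (nonZeroDivisors S)

def IsSemilocal (S : Type*) [CommRing S] : Prop := {I : Ideal S | I.IsMaximal}.Finite

def IsZeroDimensional (S : Type*) [CommRing S] : Prop :=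
  ∀ P : Ideal S, P.IsPrime → P.IsMaximal

/-- An ideal is T-nilpotent if every sequence of its elements has a vanishing
finite initial product. -/
def IsTNilpotentIdeal {S : Type*} [CommRing S] (N : Ideal S) : Prop :=
  ∀ y : ℕ → S, (∀ i, y i ∈ N) → ∃ m, ∏ i ∈ Finset.range (m + 1), y i = 0

/-!
A nilpotent element of a localization `Q` of `S` is a fraction `z / t` with `z` nilpotent in `S`,
so a vanishing initial product of numerators gives one of fractions: the nilradical of `Q` is
T-nilpotent as soon as that of `S` is. For `S = R[X₁, …, Xₙ]`, a nilpotent polynomial `f` has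
nilpotent coefficients, so `f` lies in the extension of the finitely generated ideal `I ≤ J`
spanned by them; the hypothesis on `R` kills `I₁ ⋯ I_k`, hence `f₁ ⋯ f_k`.
-/

open MvPolynomial

namespace IsLocalization

variable {S : Type*} [CommRing S] (M : Submonoid S) {Q : Type*} [CommRing Q] [Algebra S Q]

theorem exists_mul_isNilpotent_of_isNilpotent_algebraMap [IsLocalization M Q] {x : S}
    (hx : IsNilpotent (algebraMap S Q x)) : ∃ c ∈ M, IsNilpotent (c * x) := by
  obtain ⟨k, hk⟩ := hx
  rw [← map_pow, ← map_zero (algebraMap S Q)] at hk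
  obtain ⟨⟨c, hc⟩, hcx⟩ := exists_of_eq (M := M) hk
  exact ⟨c, hc, k + 1, by linear_combination (c ^ k * x) * hcx⟩

theorem surj_of_isNilpotent [IsLocalization M Q] {y : Q} (hy : IsNilpotent y) :
    ∃ z t, t ∈ M ∧ IsNilpotent z ∧ y * algebraMap S Q t = algebraMap S Q z := by
  obtain ⟨⟨x, s⟩, hxs⟩ := surj M y
  have hx : IsNilpotent (algebraMap S Q x) :=
    hxs ▸ (Commute.all _ _).isNilpotent_mul_right hy
  obtain ⟨c, hc, hcx⟩ := exists_mul_isNilpotent_of_isNilpotent_algebraMap M hx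
  refine ⟨c * x, c * s, M.mul_mem hc s.2, hcx, ?_⟩
  rw [map_mul, map_mul, ← hxs]
  ring

variable (Q) in
theorem isTNilpotentIdeal_nilradical [IsLocalization M Q]
    (hS : IsTNilpotentIdeal (nilradical S)) : IsTNilpotentIdeal (nilradical Q) := by
  intro y hy
  choose z t ht hz hyzt using fun i => surj_of_isNilpotent M (mem_nilradical.mp (hy i))
  obtain ⟨m, hm⟩ := hS z fun i => mem_nilradical.mpr (hz i)
  let tprod : M := ⟨∏ i ∈ Finset.range (m + 1), t i, M.prod_mem fun i _ => ht i⟩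
  refine ⟨m, (map_units Q tprod).mul_left_eq_zero.mp ?_⟩
  calc (∏ i ∈ Finset.range (m + 1), y i) * algebraMap S Q tprod
      = algebraMap S Q (∏ i ∈ Finset.range (m + 1), z i) := by
        simp only [tprod, map_prod, ← Finset.prod_mul_distrib, hyzt]
    _ = 0 := by rw [hm, map_zero]

end IsLocalization

namespace MvPolynomial

variable {σ R : Type*} [CommRing R]

theorem mem_map_C_span_coeffs (p : MvPolynomial σ R) :
    p ∈ Ideal.map (C : R →+* MvPolynomial σ R) (Ideal.span (p.coeffs : Set R)) := by
  refine mem_map_C_iff.mpr fun m => ?_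
  by_cases hm : p.coeff m = 0
  · simp [hm]
  · exact Ideal.subset_span (coeff_mem_coeffs m hm)

theorem span_coeffs_le_nilradical {p : MvPolynomial σ R} (hp : IsNilpotent p) :
    Ideal.span (p.coeffs : Set R) ≤ nilradical R := by
  refine Ideal.span_le.mpr fun c hc => ?_
  obtain ⟨m, -, rfl⟩ := mem_coeffs_iff.mp hc
  exact mem_nilradical.mpr (isNilpotent_iff.mp hp m)

theorem isTNilpotentIdeal_nilradical
    (hR : ∀ I : ℕ → Ideal R, (∀ i, (I i).FG) → (∀ i, I i ≤ nilradical R) →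
      ∃ k > 0, ∏ i ∈ Finset.range k, I i = ⊥) :
    IsTNilpotentIdeal (nilradical (MvPolynomial σ R)) := by
  intro f hf
  obtain ⟨k, hk, hprod⟩ := hR (fun i => Ideal.span ((f i).coeffs : Set R))
    (fun i => ⟨_, rfl⟩) fun i => span_coeffs_le_nilradical (mem_nilradical.mp (hf i))
  refine ⟨k - 1, ?_⟩
  have hmem := Ideal.prod_mem_prod (s := Finset.range k) fun i _ => mem_map_C_span_coeffs (f i)
  simp only [← Ideal.mapHom_apply, ← map_prod, hprod] at hmem
  rwa [Ideal.mapHom_apply, Ideal.map_bot, Ideal.mem_bot, ← Nat.sub_add_cancel hk] at hmem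

end MvPolynomial

theorem stmt_4_general {R : Type*} [CommRing R] (n : ℕ)
    (hJ : ∀ I : ℕ → Ideal R, (∀ i, (I i).FG) →
      (∀ i, I i ≤ (⊥ : Ideal R).jacobson) →
      ∃ k > 0, ∏ i ∈ Finset.range k, I i = ⊥) :
    IsTNilpotentIdeal (nilradical (TotalQuotient (MvPolynomial (Fin n) R))) :=
  IsLocalization.isTNilpotentIdeal_nilradical (nonZeroDivisors (MvPolynomial (Fin n) R)) _ <|
    MvPolynomial.isTNilpotentIdeal_nilradical fun I hfg hI =>
      hJ I hfg fun i => (hI i).trans Ideal.radical_le_jacobson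

theorem stmt_4 {R : Type*} [CommRing R] (n : ℕ)
    (hsemi : IsSemilocal R) (hzero : IsZeroDimensional R)
    (hJ : ∀ I : ℕ → Ideal R, (∀ i, (I i).FG) →
      (∀ i, I i ≤ (⊥ : Ideal R).jacobson) →
      ∃ k > 0, ∏ i ∈ Finset.range k, I i = ⊥) :
    IsTNilpotentIdeal (nilradical (TotalQuotient (MvPolynomial (Fin n) R))) :=
  stmt_4_general n hJ
end

section
/- Let R be a commutative semilocal zero-dimensional ring. If the total quotient ring of the polynomial ring R[X_1,...,X_n] is a perfect ring, then R satisfies the descending chain condition on principal ideals (i.e., R is perfect). -/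
/-- A commutative ring is perfect if every flat module is projective. -/
def IsPerfectRing (R : Type u) [CommRing R] : Prop :=
  ∀ (M : Type u) [AddCommGroup M] [Module R M], Module.Flat R M → Module.Projective R M

/-- The descending chain condition on principal ideals. -/
def DCCPrincipal (R : Type*) [CommRing R] : Prop :=
  ∀ a : ℕ → R, (∀ m, Ideal.span {a (m + 1)} ≤ Ideal.span {a m}) →
    ∃ N, ∀ m, N ≤ m → Ideal.span {a m} = Ideal.span {a N}

universe u

open Finset Filter

def Ideal.IsTNilpotent {A : Type*} [CommRing A] (I : Ideal A) : Prop :=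
  ∀ b : ℕ → A, (∀ i, b i ∈ I) → ∃ k, ∏ i ∈ range k, b i = 0

section BassModule

variable {Q : Type*} [CommRing Q] (b : ℕ → Q)

noncomputable def bassRel (n : ℕ) : ℕ →₀ Q :=
  Finsupp.single n 1 - Finsupp.single (n + 1) (b n)

noncomputable def bassSubmodule : Submodule Q (ℕ →₀ Q) :=
  Submodule.span Q (Set.range (bassRel b))

/-- The direct limit of `Q --b 0--> Q --b 1--> Q --> ⋯`, presented by generators `e n` and
relations `e n = b n • e (n + 1)`. -/
abbrev BassModule := (ℕ →₀ Q) ⧸ bassSubmodule b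

noncomputable def bassGen (k : ℕ) : BassModule b :=
  Submodule.Quotient.mk (Finsupp.single k 1)

/-- The weights are chosen so that `bassCoord b k (bassRel b n) = δ n k`: this functional reads off
the `k`-th coordinate in the family `bassRel b`. -/
noncomputable def bassCoord (k : ℕ) : (ℕ →₀ Q) →ₗ[Q] Q :=
  Finsupp.linearCombination Q fun j => if j ≤ k then ∏ t ∈ Ico j k, b t else 0

lemma bassCoord_single (k j : ℕ) (c : Q) :
    bassCoord b k (Finsupp.single j c) = c * if j ≤ k then ∏ t ∈ Ico j k, b t else 0 := by
  simp [bassCoord, smul_eq_mul]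

lemma bassCoord_bassRel (k n : ℕ) : bassCoord b k (bassRel b n) = if n = k then 1 else 0 := by
  rw [bassRel, map_sub, bassCoord_single, bassCoord_single]
  rcases lt_trichotomy n k with h | rfl | h
  · rw [if_pos h.le, if_pos (Nat.succ_le_of_lt h), if_neg h.ne, Finset.prod_eq_prod_Ico_succ_bot h]
    ring
  · simp
  · rw [if_neg (by omega), if_neg (by omega), if_neg (by omega)]
    ring

lemma eventually_bassCoord_eq_zero {x : ℕ →₀ Q} (hx : x ∈ bassSubmodule b) :
    ∀ᶠ k in atTop, bassCoord b k x = 0 := by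
  induction hx using Submodule.span_induction with
  | mem x hx =>
    obtain ⟨n, rfl⟩ := hx
    filter_upwards [eventually_gt_atTop n] with k hk
    rw [bassCoord_bassRel, if_neg hk.ne]
  | zero => exact Eventually.of_forall fun k => map_zero _
  | add x y _ _ hx hy =>
    filter_upwards [hx, hy] with k hxk hyk
    rw [map_add, hxk, hyk, add_zero]
  | smul c x _ hx =>
    filter_upwards [hx] with k hxk
    rw [map_smul, hxk, smul_zero]

lemma bassGen_eq_smul_bassGen_succ (k : ℕ) : bassGen b k = b k • bassGen b (k + 1) := by
  rw [bassGen, bassGen, ← Submodule.Quotient.mk_smul, Submodule.Quotient.eq, Finsupp.smul_single,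
    smul_eq_mul, mul_one]
  exact Submodule.subset_span ⟨k, rfl⟩

lemma bassGen_eq_prod_smul {i k : ℕ} (hik : i ≤ k) :
    bassGen b i = (∏ t ∈ Ico i k, b t) • bassGen b k := by
  induction k, hik using Nat.le_induction with
  | base => simp
  | succ k hik ih =>
    rw [ih, bassGen_eq_smul_bassGen_succ b k, smul_smul, Finset.prod_Ico_succ_top hik]

lemma eventually_mem_span_bassGen (x : BassModule b) :
    ∀ᶠ k in atTop, x ∈ Q ∙ bassGen b k := by
  induction x using Submodule.Quotient.induction_on with | _ x => ?_
  induction x using Finsupp.induction_linear with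
  | zero => exact Eventually.of_forall fun k => zero_mem _
  | add x y hx hy =>
    filter_upwards [hx, hy] with k hxk hyk
    exact add_mem hxk hyk
  | single j c =>
    filter_upwards [eventually_ge_atTop j] with k hk
    have hmk : Submodule.Quotient.mk (Finsupp.single j c) = c • bassGen b j := by
      rw [bassGen, ← Submodule.Quotient.mk_smul, Finsupp.smul_single, smul_eq_mul, mul_one]
    rw [hmk, bassGen_eq_prod_smul b hk, smul_smul]
    exact Submodule.smul_mem _ _ (Submodule.mem_span_singleton_self _)

lemma exists_mul_prod_eq_zero_of_smul_bassGen_eq_zero {s : Q} {T : ℕ}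
    (h : s • bassGen b T = 0) : ∃ k ≥ T, s * ∏ t ∈ Ico T k, b t = 0 := by
  rw [bassGen, ← Submodule.Quotient.mk_smul, Submodule.Quotient.mk_eq_zero, Finsupp.smul_single,
    smul_eq_mul, mul_one] at h
  obtain ⟨k, hk, hTk⟩ := ((eventually_bassCoord_eq_zero b h).and (eventually_ge_atTop T)).exists
  refine ⟨k, hTk, ?_⟩
  rwa [← Finsupp.smul_single_one, map_smul, bassCoord_single, one_mul, if_pos hTk,
    smul_eq_mul] at hk

end BassModule

theorem Module.isTrivialRelation_of_eq_smul {R M ι : Type*} [CommRing R] [AddCommGroup M]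
    [Module R M] [Fintype ι] {f : ι → R} {x : ι → M} (y : M) (a : ι → R)
    (hx : ∀ i, x i = a i • y) (hfa : ∑ i, f i * a i = 0) : Module.IsTrivialRelation f x :=
  ⟨1, fun i _ => a i, fun _ => y, fun i => by simp [hx i], fun _ => hfa⟩

/-- Finitely many elements of `BassModule b` lie in one cyclic submodule `Q ∙ bassGen b k`, and a
relation among multiples of `bassGen b k` becomes trivial after moving further along the chain. -/
theorem flat_bassModule {Q : Type*} [CommRing Q] (b : ℕ → Q) : Module.Flat Q (BassModule b) := by
  refine Module.Flat.of_forall_isTrivialRelation fun {l f x} hfx => ?_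
  obtain ⟨T, hT⟩ := (eventually_all.2 fun i => eventually_mem_span_bassGen b (x i)).exists
  choose q hq using fun i => Submodule.mem_span_singleton.1 (hT i)
  have hs : (∑ i, f i * q i) • bassGen b T = 0 := by
    simp only [Finset.sum_smul, mul_smul, hq, hfx]
  obtain ⟨k, hTk, hk⟩ := exists_mul_prod_eq_zero_of_smul_bassGen_eq_zero b hs
  refine Module.isTrivialRelation_of_eq_smul (bassGen b k) (fun i => q i * ∏ t ∈ Ico T k, b t)
    (fun i => ?_) ?_
  · rw [← hq i, bassGen_eq_prod_smul b hTk, smul_smul]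
  · simpa only [Finset.sum_mul, mul_assoc] using hk

lemma prod_range_eq_zero_of_coeff_rec {Q : Type*} [CommRing Q] {b : ℕ → Q} {c : ℕ → ℕ → Q}
    (hc : ∀ m k, c m k = (if m = k then 1 else 0) + b m * c (m + 1) k) {k : ℕ}
    (hk : c 0 k = 0) (hbk : b k ∈ (⊥ : Ideal Q).jacobson) : ∏ i ∈ range k, b i = 0 := by
  have hprod : ∀ j ≤ k, c 0 k = (∏ i ∈ range j, b i) * c j k := by
    intro j hj
    induction j with
    | zero => simp
    | succ j ih =>
      rw [ih (by omega), hc j k, if_neg (by omega), zero_add, Finset.prod_range_succ, mul_assoc]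
  have hunit : IsUnit (c k k) := by
    rw [hc k k, if_pos rfl, add_comm]
    exact Ideal.mem_jacobson_bot.1 hbk _
  rw [hprod k le_rfl] at hk
  exact hunit.mul_left_eq_zero.1 hk

/-- Bass: projectivity of `BassModule b` gives a retraction `ρ` onto `bassSubmodule b`; the
coordinates `c m k` of `ρ (single m 1)` satisfy the recursion of `prod_range_eq_zero_of_coeff_rec`
and vanish for `m = 0` and large `k`. -/
theorem IsPerfectRing.isTNilpotent_jacobson {Q : Type u} [CommRing Q] (hQ : IsPerfectRing Q) :
    (⊥ : Ideal Q).jacobson.IsTNilpotent := by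
  intro b hb
  set G := bassSubmodule b
  have := hQ _ (flat_bassModule b)
  obtain ⟨σ, hσ⟩ :=
    Module.projective_lifting_property G.mkQ LinearMap.id G.mkQ_surjective
  set ρ : (ℕ →₀ Q) →ₗ[Q] ℕ →₀ Q := LinearMap.id - σ ∘ₗ G.mkQ
  have hρ_mem : ∀ x, ρ x ∈ G := fun x => by
    rw [← Submodule.Quotient.mk_eq_zero]
    simpa [ρ, sub_eq_zero] using (LinearMap.congr_fun hσ (G.mkQ x)).symm
  have hρ_rel : ∀ n, ρ (bassRel b n) = bassRel b n := fun n => by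
    simp [ρ, (Submodule.Quotient.mk_eq_zero G).2 (Submodule.subset_span ⟨n, rfl⟩)]
  have hsingle : ∀ m, Finsupp.single m (1 : Q) = bassRel b m + b m • Finsupp.single (m + 1) 1 :=
    fun m => by rw [bassRel, Finsupp.smul_single, smul_eq_mul, mul_one, sub_add_cancel]
  set c : ℕ → ℕ → Q := fun m k => bassCoord b k (ρ (Finsupp.single m 1))
  have hc : ∀ m k, c m k = (if m = k then 1 else 0) + b m * c (m + 1) k := fun m k => by
    simp only [c]
    rw [hsingle m, map_add, map_smul, hρ_rel, map_add, map_smul, bassCoord_bassRel, smul_eq_mul]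
  obtain ⟨k, hk⟩ := (eventually_bassCoord_eq_zero b (hρ_mem (Finsupp.single 0 1))).exists
  exact ⟨k, prod_range_eq_zero_of_coeff_rec hc hk (hb k)⟩

namespace Ideal.IsTNilpotent

variable {A B : Type*} [CommRing A] [CommRing B]

theorem mono {I J : Ideal A} (hJ : J.IsTNilpotent) (hIJ : I ≤ J) : I.IsTNilpotent :=
  fun b hb => hJ b fun i => hIJ (hb i)

theorem comap {f : A →+* B} (hf : Function.Injective f) {I : Ideal B} (hI : I.IsTNilpotent) :
    (I.comap f).IsTNilpotent := by
  intro b hb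
  obtain ⟨k, hk⟩ := hI (f ∘ b) hb
  exact ⟨k, hf (by simpa [map_prod] using hk)⟩

theorem map_of_isLocalization (M : Submonoid A) [Algebra A B] [IsLocalization M B] {I : Ideal A}
    (hI : I.IsTNilpotent) : (I.map (algebraMap A B)).IsTNilpotent := by
  intro b hb
  choose x hx using fun i => (IsLocalization.mem_map_algebraMap_iff M B).1 (hb i)
  obtain ⟨k, hk⟩ := hI (fun i => (x i).1) fun i => (x i).1.2
  have hu : IsUnit (algebraMap A B (∏ i ∈ range k, ((x i).2 : A))) :=
    IsLocalization.map_units B ⟨∏ i ∈ range k, ((x i).2 : A), Submonoid.prod_mem _ fun i _ => (x i).2.2⟩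
  refine ⟨k, hu.mul_left_eq_zero.1 ?_⟩
  rw [map_prod, ← prod_mul_distrib]
  simp only [hx]
  rw [← map_prod, hk, map_zero]

/-- Infinitely many factors in `I` already force a vanishing partial product: group the factors
into consecutive blocks, each starting with a factor in `I`. -/
theorem exists_prod_range_eq_zero {I : Ideal A} (hI : I.IsTNilpotent) {c : ℕ → A}
    (hc : {m | c m ∈ I}.Infinite) : ∃ j, ∏ t ∈ range j, c t = 0 := by
  set k := Nat.nth fun m => c m ∈ I
  have hk : StrictMono k := Nat.nth_strictMono hc
  obtain ⟨J, hJ⟩ := hI (fun j => ∏ t ∈ Ico (k j) (k (j + 1)), c t) fun j => by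
    rw [Finset.prod_eq_prod_Ico_succ_bot (hk (Nat.lt_succ_self j))]
    exact I.mul_mem_right _ (Nat.nth_mem_of_infinite hc j)
  have hblocks : ∀ J, ∏ j ∈ range J, ∏ t ∈ Ico (k j) (k (j + 1)), c t
      = ∏ t ∈ Ico (k 0) (k J), c t := by
    intro J
    induction J with
    | zero => simp
    | succ J ih =>
      rw [prod_range_succ, ih, prod_Ico_consecutive _ (hk.monotone (Nat.zero_le J))
        (hk.monotone (Nat.le_succ J))]
  refine ⟨k J, ?_⟩
  rw [← prod_range_mul_prod_Ico c (hk.monotone (Nat.zero_le J)), ← hblocks, hJ, mul_zero]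

end Ideal.IsTNilpotent

theorem IsLocalization.nilradical_eq_map {A B : Type*} [CommRing A] [CommRing B] [Algebra A B]
    (M : Submonoid A) [IsLocalization M B] :
    nilradical B = (nilradical A).map (algebraMap A B) := by
  simpa [nilradical, Ideal.map_bot] using (IsLocalization.map_radical M B ⊥).symm

lemma eq_mul_prod_range {A : Type*} [CommMonoid A] {a c : ℕ → A}
    (hac : ∀ m, a (m + 1) = a m * c m) (j : ℕ) : a j = a 0 * ∏ t ∈ range j, c t := by
  induction j with
  | zero => simp
  | succ j ih => rw [hac, ih, prod_range_succ, mul_assoc]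

open IsLocalRing in
theorem IsLocalRing.dccPrincipal_of_isTNilpotent {A : Type*} [CommRing A] [IsLocalRing A]
    (h : (maximalIdeal A).IsTNilpotent) : DCCPrincipal A := by
  intro a ha
  choose c hc using fun m => Ideal.span_singleton_le_span_singleton.1 (ha m)
  by_cases hS : {m | c m ∈ maximalIdeal A}.Finite
  · obtain ⟨N, hN⟩ := hS.bddAbove
    refine ⟨N + 1, fun m hm => ?_⟩
    induction m, hm using Nat.le_induction with
    | base => rfl
    | succ m hm ih =>
      have hunit : IsUnit (c m) := by
        by_contra hnu
        have := hN ((mem_maximalIdeal _).2 hnu)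
        omega
      rw [hc m, Ideal.span_singleton_mul_right_unit hunit, ih]
  · obtain ⟨N, hN⟩ := h.exists_prod_range_eq_zero hS
    have haN : a N = 0 := by rw [eq_mul_prod_range hc, hN, mul_zero]
    refine ⟨N, fun m hm => le_antisymm (antitone_nat_of_succ_le (f := fun m => Ideal.span {a m}) ha hm) ?_⟩
    rw [haN, Ideal.span_singleton_eq_bot.2 rfl]
    exact bot_le

theorem dccPrincipal_of_localization_maximal {R : Type*} [CommRing R] (hsemi : IsSemilocal R)
    (h : ∀ (P : Ideal R) [P.IsMaximal], DCCPrincipal (Localization.AtPrime P)) :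
    DCCPrincipal R := by
  intro a ha
  have hloc : ∀ P ∈ {P : Ideal R | P.IsMaximal}, ∀ᶠ N in atTop, ∀ [P.IsMaximal], ∀ m ≥ N,
      (Ideal.span {a m}).map (algebraMap R (Localization.AtPrime P))
        = (Ideal.span {a N}).map (algebraMap R (Localization.AtPrime P)) := by
    intro P (hP : P.IsMaximal)
    obtain ⟨K, hK⟩ := h P (fun m => algebraMap R _ (a m)) fun m =>
      Ideal.span_singleton_le_span_singleton.2
        (map_dvd _ (Ideal.span_singleton_le_span_singleton.1 (ha m)))
    filter_upwards [eventually_ge_atTop K] with N hN _ m hm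
    simp only [Ideal.map_span, Set.image_singleton]
    rw [hK m (hN.trans hm), hK N hN]
  obtain ⟨N, hN⟩ := ((eventually_all_finite hsemi).2 hloc).exists
  exact ⟨N, fun m hm => Ideal.eq_of_localization_maximal fun P hP => hN P hP m hm⟩

theorem stmt_5 {R : Type u} [CommRing R] (n : ℕ)
    (hsemi : IsSemilocal R) (hzero : IsZeroDimensional R)
    (hperf : IsPerfectRing (TotalQuotient (MvPolynomial (Fin n) R))) :
    DCCPrincipal R := by
  have : Ring.KrullDimLE 0 R := .mk₀ hzero
  have hR : (nilradical R).IsTNilpotent := by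
    have hinj : Function.Injective ((algebraMap (MvPolynomial (Fin n) R)
        (TotalQuotient (MvPolynomial (Fin n) R))).comp MvPolynomial.C) :=
      (IsLocalization.injective (M := nonZeroDivisors (MvPolynomial (Fin n) R)) _ le_rfl).comp (MvPolynomial.C_injective _ _)
    exact ((hperf.isTNilpotent_jacobson.mono Ideal.radical_le_jacobson).comap hinj).mono
      fun x hx => mem_nilradical.2 ((mem_nilradical.1 hx).map _)
  refine dccPrincipal_of_localization_maximal hsemi fun P _ => ?_
  have : Ring.KrullDimLE 0 (Localization.AtPrime P) :=
    .of_isLocalization P (P.mem_minimalPrimes_of_krullDimLE_zero) _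
  refine IsLocalRing.dccPrincipal_of_isTNilpotent ?_
  rw [← Ring.KrullDimLE.nilradical_eq_maximalIdeal, IsLocalization.nilradical_eq_map P.primeCompl]
  exact hR.map_of_isLocalization P.primeCompl
end

section
/- Let R be a commutative perfect ring with Jacobson radical J, and let {I_i} be any sequence of finitely generated ideals of R contained in J. Then there exists k > 0 such that I_1 I_2 ··· I_k = 0. -/
/-!
The partial products `P k = I 0 * ⋯ * I (k - 1)` form a descending chain of finitely generated
ideals, so by perfectness `P (N + 1) = P N * I N = P N` for some `N`. Since `I N` lies in the
Jacobson radical, Nakayama's lemma gives `P N = 0`.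
-/

/-- Descending chain condition on finitely generated ideals (one characterization
of commutative perfect rings). -/
def DCCFGIdeals (R : Type*) [CommRing R] : Prop :=
  ∀ I : ℕ → Ideal R, (∀ m, (I m).FG) → (∀ m, I (m + 1) ≤ I m) →
    ∃ N, ∀ m, N ≤ m → I m = I N

namespace Ideal

variable {R : Type*} [CommRing R]

theorem fg_prod_range {I : ℕ → Ideal R} (hfg : ∀ i, (I i).FG) (k : ℕ) :
    (∏ i ∈ Finset.range k, I i).FG := by
  induction k with
  | zero => exact ⟨{1}, by simp⟩
  | succ k ih =>
    rw [Finset.prod_range_succ]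
    exact ih.mul (hfg k)

theorem antitone_prod_range (I : ℕ → Ideal R) :
    Antitone fun k ↦ ∏ i ∈ Finset.range k, I i :=
  antitone_nat_of_succ_le fun k ↦ (Finset.prod_range_succ I k).trans_le Ideal.mul_le_left

theorem eq_bot_of_mul_eq_self_of_le_jacobson {K J : Ideal R} (hK : K.FG)
    (hJ : J ≤ (⊥ : Ideal R).jacobson) (h : K * J = K) : K = ⊥ :=
  Submodule.eq_bot_of_le_smul_of_le_jacobson_bot J K hK (by rw [smul_eq_mul, mul_comm, h]) hJ

end Ideal

theorem DCCFGIdeals.exists_succ_eq {R : Type*} [CommRing R] (hperf : DCCFGIdeals R)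
    {P : ℕ → Ideal R} (hfg : ∀ m, (P m).FG) (hanti : Antitone P) : ∃ N, P (N + 1) = P N :=
  let ⟨N, hN⟩ := hperf P hfg fun m ↦ hanti m.le_succ
  ⟨N, hN (N + 1) N.le_succ⟩

theorem stmt_6 {R : Type*} [CommRing R] (hperf : DCCFGIdeals R)
    (I : ℕ → Ideal R) (hfg : ∀ i, (I i).FG)
    (hJ : ∀ i, I i ≤ (⊥ : Ideal R).jacobson) :
    ∃ k > 0, ∏ i ∈ Finset.range k, I i = ⊥ := by
  obtain ⟨N, hN⟩ :=
    hperf.exists_succ_eq (Ideal.fg_prod_range hfg) (Ideal.antitone_prod_range I)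
  have hstable : (∏ i ∈ Finset.range N, I i) * I N = ∏ i ∈ Finset.range N, I i := by
    rwa [← Finset.prod_range_succ]
  refine ⟨N + 1, N.succ_pos, ?_⟩
  rw [hN, Ideal.eq_bot_of_mul_eq_self_of_le_jacobson (Ideal.fg_prod_range hfg N) (hJ N) hstable]
end

section
/- In a Prüfer domain R, there is no regular sequence of length greater than 1; that is, if x, y are nonzero non-units of R, then x, y is not a regular sequence. -/
/-! Localizing at a prime `P` where `R_P` is a valuation ring makes any two elements
comparable for divisibility; clearing denominators, `x ∣ y * s` or `y ∣ x * s` for some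
`s ∉ P`. For a regular sequence `x, y` either divisibility cancels down to `x ∣ s` or
`y ∣ s`, so `s ∈ P` as soon as `x, y ∈ P`. Taking `P` maximal over `(x, y)` gives a
contradiction. -/

/-- A Prüfer domain: an integral domain whose localizations at maximal ideals are
valuation domains. -/
def IsPruferDomain (R : Type*) [CommRing R] [IsDomain R] : Prop :=
  ∀ M : Ideal R, ∀ _ : M.IsMaximal, ValuationRing (Localization.AtPrime M)

namespace IsLocalization

variable {R S : Type*} [CommRing R] [CommRing S] [Algebra R S] (M : Submonoid R)
  [IsLocalization M S]

theorem exists_mem_dvd_mul_of_algebraMap_dvd {x y : R}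
    (h : algebraMap R S x ∣ algebraMap R S y) : ∃ s ∈ M, x ∣ y * s := by
  obtain ⟨c, hc⟩ := h
  obtain ⟨⟨a, t⟩, rfl⟩ := mk'_surjective M c
  have hmap : algebraMap R S (y * t) = algebraMap R S (x * a) := by
    rw [map_mul, map_mul, hc, mul_assoc, mk'_spec]
  obtain ⟨u, hu⟩ := (eq_iff_exists M S).mp hmap
  exact ⟨t * u, M.mul_mem t.2 u.2, u * a, by linear_combination hu⟩

end IsLocalization

theorem Ideal.exists_mem_primeCompl_dvd_mul_or_dvd_mul {R : Type*} [CommRing R] [IsDomain R]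
    (P : Ideal R) [P.IsPrime] [ValuationRing (Localization.AtPrime P)] (x y : R) :
    ∃ s ∈ P.primeCompl, x ∣ y * s ∨ y ∣ x * s := by
  rcases ValuationRing.dvd_total (algebraMap R (Localization.AtPrime P) x)
    (algebraMap R (Localization.AtPrime P) y) with h | h
  · obtain ⟨s, hs, hdvd⟩ := IsLocalization.exists_mem_dvd_mul_of_algebraMap_dvd P.primeCompl h
    exact ⟨s, hs, .inl hdvd⟩
  · obtain ⟨s, hs, hdvd⟩ := IsLocalization.exists_mem_dvd_mul_of_algebraMap_dvd P.primeCompl h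
    exact ⟨s, hs, .inr hdvd⟩

namespace RingTheory.Sequence.IsWeaklyRegular

open Pointwise

variable {R : Type*} [CommRing R] {x y z : R}

theorem fst_dvd_of_dvd_mul_left (h : IsWeaklyRegular R [x, y]) (hz : x ∣ y * z) : x ∣ z := by
  have hy : IsSMulRegular (QuotSMulTop x R) y := by
    simpa using ((isWeaklyRegular_cons_iff R x [y]).mp h).2
  have hmem (w : R) : w ∈ x • (⊤ : Submodule R R) ↔ x ∣ w := by
    simp [Submodule.mem_smul_pointwise_iff_exists, dvd_def, eq_comm]
  rw [← hmem] at hz ⊢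
  exact mem_of_isSMulRegular_quotient_of_smul_mem hy hz

theorem snd_dvd_of_dvd_mul_left (h : IsWeaklyRegular R [x, y]) (hz : y ∣ x * z) : y ∣ z := by
  obtain ⟨a, ha⟩ := hz
  obtain ⟨d, rfl⟩ := h.fst_dvd_of_dvd_mul_left ⟨z, ha.symm⟩
  have hx : IsSMulRegular R x := ((isWeaklyRegular_cons_iff R x [y]).mp h).1
  exact ⟨d, hx (by simp only [smul_eq_mul]; linear_combination ha)⟩

end RingTheory.Sequence.IsWeaklyRegular

theorem stmt_8_general {R : Type*} [CommRing R] [IsDomain R] (hR : IsPruferDomain R)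
    (x y : R) :
    ¬ RingTheory.Sequence.IsRegular R [x, y] := by
  intro hreg
  have hproper : Ideal.ofList [x, y] ≠ ⊤ := fun h =>
    hreg.top_ne_smul (by rw [h, smul_eq_mul, Ideal.top_mul])
  obtain ⟨M, hM, hle⟩ := Ideal.exists_le_maximal _ hproper
  have := hR M hM
  have hxM : x ∈ M := hle (Ideal.subset_span (by simp))
  have hyM : y ∈ M := hle (Ideal.subset_span (by simp))
  obtain ⟨s, hs, hdvd | hdvd⟩ := Ideal.exists_mem_primeCompl_dvd_mul_or_dvd_mul M x y
  · exact hs (M.mem_of_dvd (hreg.fst_dvd_of_dvd_mul_left hdvd) hxM)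
  · exact hs (M.mem_of_dvd (hreg.snd_dvd_of_dvd_mul_left hdvd) hyM)

theorem stmt_8 {R : Type*} [CommRing R] [IsDomain R] (hR : IsPruferDomain R)
    (x y : R) (hx0 : x ≠ 0) (hy0 : y ≠ 0) (hx : ¬ IsUnit x) (hy : ¬ IsUnit y) :
    ¬ RingTheory.Sequence.IsRegular R [x, y] :=
  stmt_8_general hR x y
end

section
/- Let S be an integral domain with field of fractions H, let D be a nonzero torsion-free divisible S-module, and let R = S ⋉ D be the idealization (trivial extension). Then an element (s, d) of R is a zero-divisor if and only if s = 0, and for every regular element r = (s, d) of R with s ≠ 0, the principal ideal rR equals (sS) ⊕ D, so that R/rR ≅ S/sS as rings. -/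
/-!
If `s ≠ 0`, then `(s, d)` is regular: the first coordinate of a product is a product in the
domain `S`, and on the second coordinate `s` acts injectively because `D` is torsion-free.
If `s = 0`, then `(0, d)` annihilates `(0, d') ≠ 0` since `D * D = 0`. For `s ≠ 0`, divisibility
of `D` makes `(s, d)(t, e) = (st, s e + t d)` reach every second coordinate, so `rR` is the
preimage of `sS` under the projection `R → S`, whence `R ⧸ rR ≃ S ⧸ sS`.
-/

open TrivSqZeroExt

noncomputable def Ideal.quotientComapEquivOfSurjective {A B : Type*} [CommRing A] [CommRing B]
    {f : A →+* B} (hf : Function.Surjective f) (J : Ideal B) : A ⧸ J.comap f ≃+* B ⧸ J :=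
  (Ideal.quotEquivOfEq (by rw [← RingHom.comap_ker, Ideal.mk_ker])).trans
    (RingHom.quotientKerEquivOfSurjective
      (f := (Ideal.Quotient.mk J).comp f) (Ideal.Quotient.mk_surjective.comp hf))

namespace TrivSqZeroExt

section CommSemiring

variable {R M : Type*} [CommSemiring R] [AddCommMonoid M] [Module R M] [Module Rᵐᵒᵖ M]
  [IsCentralScalar R M]

theorem mem_nonZeroDivisors_of_isRegular_fst [Module.IsTorsionFree R M] {z : TrivSqZeroExt R M}
    (hz : IsRegular (fst z)) : z ∈ nonZeroDivisors (TrivSqZeroExt R M) := by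
  refine mem_nonZeroDivisors_iff_right.mpr fun x hx => ?_
  have hx_fst : fst x = 0 :=
    mem_nonZeroDivisors_iff_right.mp hz.mem_nonZeroDivisors _ (by rw [← fst_mul, hx, fst_zero])
  have hx_snd : fst z • snd x = 0 := by
    simpa [hx_fst] using congrArg snd hx
  exact ext hx_fst (hz.isSMulRegular.right_eq_zero_of_smul hx_snd)

theorem notMem_nonZeroDivisors_of_fst_eq_zero [Nontrivial M] {z : TrivSqZeroExt R M}
    (hz : fst z = 0) : z ∉ nonZeroDivisors (TrivSqZeroExt R M) := by
  intro hmem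
  obtain ⟨m, hm⟩ := exists_ne (0 : M)
  have hz_inr : z = inr (snd z) := ext hz rfl
  have : (inr m : TrivSqZeroExt R M) = 0 :=
    mem_nonZeroDivisors_iff_right.mp hmem _ (by rw [hz_inr, inr_mul_inr])
  exact hm (by simpa using congrArg snd this)

end CommSemiring

section CommRing

variable {R M : Type*} [CommRing R] [AddCommGroup M] [Module R M] [Module Rᵐᵒᵖ M]
  [IsCentralScalar R M]

theorem notMem_nonZeroDivisors_iff_fst_eq_zero [IsDomain R] [Nontrivial M]
    [Module.IsTorsionFree R M] (z : TrivSqZeroExt R M) :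
    z ∉ nonZeroDivisors (TrivSqZeroExt R M) ↔ fst z = 0 :=
  ⟨fun hz => by_contra fun h => hz <|
      mem_nonZeroDivisors_of_isRegular_fst (isRegular_iff_ne_zero.mpr h),
    notMem_nonZeroDivisors_of_fst_eq_zero⟩

theorem mem_span_singleton_iff_fst_mem {r : TrivSqZeroExt R M}
    (hr : Function.Surjective fun m : M => fst r • m) (z : TrivSqZeroExt R M) :
    z ∈ Ideal.span {r} ↔ fst z ∈ Ideal.span {fst r} := by
  simp only [Ideal.mem_span_singleton']
  constructor
  · rintro ⟨c, rfl⟩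
    exact ⟨fst c, (fst_mul c r).symm⟩
  · rintro ⟨t, ht⟩
    obtain ⟨e, he⟩ : ∃ e, fst r • e = snd z - t • snd r := hr _
    refine ⟨inl t + inr e, ext ?_ ?_⟩
    · simpa using ht
    · simp only [snd_mul, fst_add, fst_inl, fst_inr, snd_add, snd_inl, snd_inr, op_smul_eq_smul,
        add_zero, zero_add]
      rw [he, add_sub_cancel]

theorem span_singleton_eq_comap_fstHom {r : TrivSqZeroExt R M}
    (hr : Function.Surjective fun m : M => fst r • m) :
    Ideal.span {r} = (Ideal.span {fst r}).comap (fstHom R R M) :=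
  Ideal.ext (mem_span_singleton_iff_fst_mem hr)

end CommRing

end TrivSqZeroExt

theorem stmt_9 {S : Type*} [CommRing S] [IsDomain S]
    {D : Type*} [AddCommGroup D] [Module S D] [Module Sᵐᵒᵖ D] [IsCentralScalar S D]
    (hD0 : Nontrivial D)
    (htf : ∀ (s : S) (d : D), s • d = 0 → s = 0 ∨ d = 0)
    (hdiv : ∀ s : S, s ≠ 0 → ∀ d : D, ∃ d' : D, s • d' = d) :
    (∀ z : TrivSqZeroExt S D, z ∉ nonZeroDivisors (TrivSqZeroExt S D) ↔ fst z = 0) ∧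
    (∀ r : TrivSqZeroExt S D, fst r ≠ 0 →
      (∀ z : TrivSqZeroExt S D,
        z ∈ Ideal.span {r} ↔ fst z ∈ Ideal.span {fst r}) ∧
      Nonempty ((TrivSqZeroExt S D ⧸ (Ideal.span {r} : Ideal (TrivSqZeroExt S D))) ≃+*
        (S ⧸ (Ideal.span {fst r} : Ideal S)))) := by
  have : Module.IsTorsionFree S D := .of_smul_eq_zero htf
  refine ⟨notMem_nonZeroDivisors_iff_fst_eq_zero, fun r hr => ?_⟩
  have hr_surj : Function.Surjective fun d : D => fst r • d := hdiv _ hr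
  refine ⟨mem_span_singleton_iff_fst_mem hr_surj, ⟨?_⟩⟩
  exact (Ideal.quotEquivOfEq (span_singleton_eq_comap_fstHom hr_surj)).trans
    (Ideal.quotientComapEquivOfSurjective (f := (fstHom S S D).toRingHom)
      (fun s => ⟨inl s, fst_inl D s⟩) _)
end

section
/- Let S be a commutative local ring with maximal ideal M containing a field F with S = F + M, and let k be a subfield of F. Then R = k + M is a local ring with maximal ideal M, and every prime ideal of R is a prime ideal of S; in particular R and S have the same prime spectrum as sets. -/
/-!
Write `M` for the maximal ideal of `S`. Since `k` is a field, an element `c + m` of `R` with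
`c ∈ k \ {0}` has its inverse `c⁻¹ - c⁻¹ m (c + m)⁻¹` in `R`, so the units of `R` are exactly
the elements outside `M`; hence `R` is local and each proper ideal `P` of `R` lies in `M`.
For `p ∈ P` and `s ∈ S` we get `(s p)² = (s² p) p ∈ P` because `s² p ∈ M ⊆ R`, so `s p ∈ P`
when `P` is prime. Thus `P` is an ideal of `S`, and it is prime there: if `x y ∈ P` and, say,
`x ∉ M`, then `x` is a unit of `S` and `y = x⁻¹ (x y) ∈ P`.
-/

open IsLocalRing

namespace Subring

variable {S : Type*} [CommRing S] {R : Subring S}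

def idealOfMulMem (P : Ideal R)
    (hP : ∀ (s : S) {p : R}, p ∈ P → ∃ h : s * p ∈ R, (⟨s * p, h⟩ : R) ∈ P) : Ideal S where
  carrier := {s | ∃ h : s ∈ R, (⟨s, h⟩ : R) ∈ P}
  add_mem' := fun ⟨ha, haP⟩ ⟨hb, hbP⟩ => ⟨R.add_mem ha hb, P.add_mem haP hbP⟩
  zero_mem' := ⟨R.zero_mem, P.zero_mem⟩
  smul_mem' s _ := fun ⟨hx, hxP⟩ => hP s (p := ⟨_, hx⟩) hxP

theorem mem_idealOfMulMem {P : Ideal R}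
    {hP : ∀ (s : S) {p : R}, p ∈ P → ∃ h : s * p ∈ R, (⟨s * p, h⟩ : R) ∈ P} {s : S} :
    s ∈ idealOfMulMem P hP ↔ ∃ h : s ∈ R, (⟨s, h⟩ : R) ∈ P :=
  Iff.rfl

variable [IsLocalRing S]

theorem isLocalHom_subtype_of_isField {k : Subring S} (hk : IsField k)
    (hR : ∀ s : S, s ∈ R ↔ ∃ c ∈ k, s - c ∈ maximalIdeal S) : IsLocalHom R.subtype := by
  refine ⟨fun r ⟨u, hu⟩ => ?_⟩
  change (u : S) = r at hu
  obtain ⟨c, hck, hrc⟩ := (hR r).1 r.2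
  have hc : (⟨c, hck⟩ : k) ≠ 0 := fun hc0 => by
    rw [show c = 0 from congrArg Subtype.val hc0, sub_zero] at hrc
    exact hrc (hu ▸ u.isUnit)
  obtain ⟨d, hcd⟩ := hk.mul_inv_cancel hc
  replace hcd : c * d = 1 := Subtype.ext_iff.mp hcd
  have hrv : (r : S) * ↑u⁻¹ = 1 := by rw [← hu, Units.mul_inv]
  have hvR : (↑u⁻¹ : S) ∈ R := by
    refine (hR _).2 ⟨d, d.2, ?_⟩
    have hv : (↑u⁻¹ : S) - d = -(↑u⁻¹ * d) * (r - c) := by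
      linear_combination (d : S) * hrv - (↑u⁻¹ : S) * hcd
    exact hv ▸ Ideal.mul_mem_left _ _ hrc
  exact IsUnit.of_mul_eq_one ⟨_, hvR⟩ (Subtype.ext hrv)

theorem coe_mem_maximalIdeal_of_mem [IsLocalHom R.subtype] {P : Ideal R} (hP : P ≠ ⊤)
    {p : R} (hp : p ∈ P) : (p : S) ∈ maximalIdeal S := fun hu =>
  hP (P.eq_top_of_isUnit_mem hp ((isUnit_map_iff R.subtype p).mp hu))

theorem coe_mul_mem_of_isPrime [IsLocalHom R.subtype] (hMR : (maximalIdeal S : Set S) ⊆ R)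
    {P : Ideal R} (hP : P.IsPrime) (s : S) {p : R} (hp : p ∈ P) :
    ∃ h : s * p ∈ R, (⟨s * p, h⟩ : R) ∈ P := by
  have hpM := coe_mem_maximalIdeal_of_mem hP.ne_top hp
  have hspR : s * p ∈ R := hMR (Ideal.mul_mem_left _ s hpM)
  have hsspR : s ^ 2 * p ∈ R := hMR (Ideal.mul_mem_left _ _ hpM)
  refine ⟨hspR, hP.mem_of_pow_mem 2 ?_⟩
  have hsq : (⟨s * p, hspR⟩ : R) ^ 2 = ⟨s ^ 2 * p, hsspR⟩ * p := Subtype.ext (by push_cast; ring)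
  exact hsq ▸ P.mul_mem_left _ hp

theorem isPrime_idealOfMulMem (hMR : (maximalIdeal S : Set S) ⊆ R) {P : Ideal R}
    (hP : P.IsPrime) {hPS : ∀ (s : S) {p : R}, p ∈ P → ∃ h : s * p ∈ R, (⟨s * p, h⟩ : R) ∈ P} :
    (idealOfMulMem P hPS).IsPrime := by
  refine ⟨fun htop => ?_, fun {x y} hxy => ?_⟩
  · obtain ⟨_, h1⟩ := mem_idealOfMulMem.1 ((Ideal.eq_top_iff_one _).1 htop)
    exact hP.ne_top ((Ideal.eq_top_iff_one _).2 h1)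
  by_cases hx : IsUnit x
  · exact .inr ((Ideal.unit_mul_mem_iff_mem _ hx).1 hxy)
  by_cases hy : IsUnit y
  · exact .inl ((Ideal.unit_mul_mem_iff_mem _ hy).1 (mul_comm x y ▸ hxy))
  have hxR : x ∈ R := hMR hx
  have hyR : y ∈ R := hMR hy
  obtain ⟨_, hxyP⟩ := mem_idealOfMulMem.1 hxy
  exact (hP.mem_or_mem (show (⟨x, hxR⟩ * ⟨y, hyR⟩ : R) ∈ P from hxyP)).imp
    (fun h => ⟨hxR, h⟩) (fun h => ⟨hyR, h⟩)

end Subring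

theorem stmt_15_general {S : Type*} [CommRing S] [IsLocalRing S]
    (k : Subring S) (hk : IsField k)
    (R : Subring S)
    (hR : ∀ s : S, s ∈ R ↔ ∃ c ∈ k, s - c ∈ IsLocalRing.maximalIdeal S) :
    IsLocalRing R ∧
    (∀ r : R, ¬ IsUnit r ↔ (r : S) ∈ IsLocalRing.maximalIdeal S) ∧
    (∀ P : Ideal R, P.IsPrime →
      ∃ Q : Ideal S, Q.IsPrime ∧ ∀ s : S, s ∈ Q ↔ ∃ h : s ∈ R, (⟨s, h⟩ : R) ∈ P) := by
  have hMR : (maximalIdeal S : Set S) ⊆ R := fun s hs =>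
    (hR s).2 ⟨0, k.zero_mem, by simpa using hs⟩
  have := Subring.isLocalHom_subtype_of_isField hk hR
  refine ⟨R.subtype.domain_isLocalRing, fun r => ?_, fun P hP => ?_⟩
  · rw [mem_maximalIdeal, mem_nonunits_iff, ← isUnit_map_iff R.subtype r]
    rfl
  · exact ⟨Subring.idealOfMulMem P (Subring.coe_mul_mem_of_isPrime hMR hP),
      Subring.isPrime_idealOfMulMem hMR hP, fun _ => Subring.mem_idealOfMulMem⟩

theorem stmt_15 {S : Type*} [CommRing S] [IsLocalRing S]
    (F : Subring S) (hF : IsField F)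
    (hFM : ∀ s : S, ∃ f ∈ F, s - f ∈ IsLocalRing.maximalIdeal S)
    (k : Subring S) (hkF : k ≤ F) (hk : IsField k)
    (R : Subring S)
    (hR : ∀ s : S, s ∈ R ↔ ∃ c ∈ k, s - c ∈ IsLocalRing.maximalIdeal S) :
    IsLocalRing R ∧
    (∀ r : R, ¬ IsUnit r ↔ (r : S) ∈ IsLocalRing.maximalIdeal S) ∧
    (∀ P : Ideal R, P.IsPrime →
      ∃ Q : Ideal S, Q.IsPrime ∧ ∀ s : S, s ∈ Q ↔ ∃ h : s ∈ R, (⟨s, h⟩ : R) ∈ P) :=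
  stmt_15_general k hk R hR
end

section
/- Let R be a commutative ring whose total quotient ring Q(R) is zero-dimensional, and let P be a prime ideal of R. Then the total quotient ring of the localization R_P equals the localization of Q(R) at the image of R \ P; in particular, if Q(R) is a perfect ring, then Q(R_P) is perfect. -/
/-!
A zero-dimensional ring is strongly π-regular: every `a` satisfies `a ^ n = a ^ (n + 1) * b` for
some `n` and `b`, for otherwise the multiplicative set of all `a ^ n * (1 - a * x)` misses `0`, and
a prime ideal avoiding it could not be maximal. Strong π-regularity passes to quotients, makes
every non-zero-divisor a unit, and makes every localization map surjective (`b` inverts `s`).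

For any submonoid `M` of `R` (such as `R \ P`) with image `S` in `Q(R)`, the ring `S⁻¹Q(R)` is the
localization of `M⁻¹R` at the image of the non-zero-divisors of `R`, which are non-zero-divisors
there. Conversely every non-zero-divisor of `M⁻¹R` stays one in `S⁻¹Q(R)`, a quotient of `Q(R)`,
hence becomes a unit. So `S⁻¹Q(R) = Q(M⁻¹R)`, and DCC on principal ideals passes from `Q(R)` to
this quotient.
-/

open IsLocalization Function

def IsStronglyPiRegular (A : Type*) [CommRing A] : Prop :=
  ∀ a : A, ∃ (n : ℕ) (b : A), a ^ n = a ^ (n + 1) * b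

theorem mul_eq_one_of_pow_eq_pow_succ_mul {A : Type*} [CommRing A] {a b : A} {n : ℕ}
    (ha : a ∈ nonZeroDivisors A) (h : a ^ n = a ^ (n + 1) * b) : a * b = 1 := by
  refine (mul_cancel_left_mem_nonZeroDivisors (pow_mem ha n)).mp ?_
  rw [mul_one, ← mul_assoc, ← pow_succ, ← h]

theorem IsZeroDimensional.isStronglyPiRegular {A : Type*} [CommRing A]
    (hA : IsZeroDimensional A) : IsStronglyPiRegular A := by
  intro a
  by_contra! hreg
  let S : Submonoid A :=
    { carrier := {y | ∃ (n : ℕ) (x : A), y = a ^ n * (1 - a * x)}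
      one_mem' := ⟨0, 0, by ring⟩
      mul_mem' := by
        rintro _ _ ⟨n, x, rfl⟩ ⟨m, y, rfl⟩
        exact ⟨n + m, x + y - a * x * y, by ring⟩ }
  have hdisj : Disjoint ((⊥ : Ideal A) : Set A) S := by
    refine Set.disjoint_left.mpr fun y hy ⟨n, x, hyS⟩ => hreg n x ?_
    rw [SetLike.mem_coe, Ideal.mem_bot] at hy
    linear_combination hy - hyS
  obtain ⟨p, hp, -, hpS⟩ := Ideal.exists_le_prime_disjoint ⊥ S hdisj
  have hap : a ∉ p := Set.disjoint_left.mp hpS.symm ⟨1, 0, by ring⟩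
  obtain ⟨y, i, hi, hyi⟩ := (hA p hp).exists_inv hap
  exact Set.disjoint_left.mp hpS (show i ∈ p from hi) ⟨0, y, by linear_combination hyi⟩

namespace IsStronglyPiRegular

variable {A B : Type*} [CommRing A] [CommRing B]

theorem of_surjective (hA : IsStronglyPiRegular A) (f : A →+* B) (hf : Surjective f) :
    IsStronglyPiRegular B := by
  intro c
  obtain ⟨a, rfl⟩ := hf c
  obtain ⟨n, b, h⟩ := hA a
  exact ⟨n, f b, by rw [← map_pow, ← map_pow, ← map_mul, h]⟩

theorem isUnit_of_mem_nonZeroDivisors (hA : IsStronglyPiRegular A) {a : A}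
    (ha : a ∈ nonZeroDivisors A) : IsUnit a := by
  obtain ⟨n, b, h⟩ := hA a
  exact IsUnit.of_mul_eq_one b (mul_eq_one_of_pow_eq_pow_succ_mul ha h)

theorem algebraMap_surjective (hA : IsStronglyPiRegular A) (S : Submonoid A) [Algebra A B]
    [IsLocalization S B] : Surjective (algebraMap A B) := by
  intro z
  obtain ⟨⟨x, s⟩, rfl⟩ := mk'_surjective S z
  obtain ⟨n, b, h⟩ := hA s
  have hinv : algebraMap A B s * algebraMap A B b = 1 :=
    mul_eq_one_of_pow_eq_pow_succ_mul (map_units B s).mem_nonZeroDivisors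
      (by rw [← map_pow, ← map_pow, ← map_mul, h])
  refine ⟨x * b, (mk'_eq_iff_eq_mul.mpr ?_).symm⟩
  rw [map_mul, mul_assoc, mul_comm (algebraMap A B b), hinv, mul_one]

end IsStronglyPiRegular

theorem DCCPrincipal.of_surjective {A B : Type*} [CommRing A] [CommRing B] (hA : DCCPrincipal A)
    (f : A →+* B) (hf : Surjective f) : DCCPrincipal B := by
  intro a hchain
  have hspan : ∀ x : A, Ideal.span {f x} = (Ideal.span {x}).map f := fun x => by
    rw [Ideal.map_span, Set.image_singleton]
  choose c hc using fun m => Ideal.span_singleton_le_span_singleton.mp (hchain m)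
  obtain ⟨x, hx⟩ := hf (a 0)
  choose y hy using fun m => hf (c m)
  let b : ℕ → A := fun m => x * ∏ i ∈ Finset.range m, y i
  have hb : ∀ m, f (b m) = a m := by
    intro m
    induction m with
    | zero => simp [b, hx]
    | succ m ih =>
      rw [hc m, ← ih, ← hy m, ← map_mul]
      simp [b, Finset.prod_range_succ, mul_assoc]
  obtain ⟨N, hN⟩ := hA b fun m => Ideal.span_singleton_le_span_singleton.mpr
    ⟨y m, by simp [b, Finset.prod_range_succ, mul_assoc]⟩
  exact ⟨N, fun m hm => by rw [← hb m, ← hb N, hspan, hspan, hN m hm]⟩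

section TotalQuotient

variable {R Q A T : Type*} [CommRing R] [CommRing Q] [CommRing A] [CommRing T]
  (M : Submonoid R) [Algebra R Q] [Algebra R A] [IsLocalization M A]

theorem le_localizationLocalizationSubmodule_algebraMapSubmonoid (N : Submonoid R)
    [IsLocalization N Q] :
    M ≤ localizationLocalizationSubmodule N (Algebra.algebraMapSubmonoid Q M) := fun m hm =>
  mem_localizationLocalizationSubmodule.mpr ⟨⟨_, Submonoid.mem_map_of_mem _ hm⟩, 1, by simp⟩

theorem map_localizationLocalizationSubmodule_le_nonZeroDivisors [IsFractionRing R Q] :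
    (localizationLocalizationSubmodule (nonZeroDivisors R)
      (Algebra.algebraMapSubmonoid Q M)).map (algebraMap R A) ≤ nonZeroDivisors A := by
  rintro _ ⟨x, hx, rfl⟩
  obtain ⟨⟨_, m, hm, rfl⟩, d, hxmd⟩ := mem_localizationLocalizationSubmodule.mp hx
  have hx : x = m * d := IsFractionRing.injective R Q (by simpa using hxmd)
  rw [hx, map_mul]
  exact mul_mem (map_units A ⟨m, hm⟩).mem_nonZeroDivisors
    (map_nonZeroDivisors_le M A ⟨d, d.2, rfl⟩)

theorem IsStronglyPiRegular.isLocalization_nonZeroDivisors [IsFractionRing R Q]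
    (hQ : IsStronglyPiRegular Q) [Algebra Q T] [IsLocalization (Algebra.algebraMapSubmonoid Q M) T]
    [Algebra R T] [IsScalarTower R Q T] [Algebra A T] [IsScalarTower R A T] :
    IsLocalization (nonZeroDivisors A) T := by
  let N := localizationLocalizationSubmodule (nonZeroDivisors R) (Algebra.algebraMapSubmonoid Q M)
  have : IsLocalization N T := localization_localization_isLocalization _ _ T
  have := isLocalization_of_submonoid_le A T M N
    (le_localizationLocalizationSubmodule_algebraMapSubmonoid M _)
  have hT : IsStronglyPiRegular T :=
    hQ.of_surjective (algebraMap Q T) (hQ.algebraMap_surjective (Algebra.algebraMapSubmonoid Q M))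
  refine IsLocalization.of_le (N.map (algebraMap R A)) _
    (map_localizationLocalizationSubmodule_le_nonZeroDivisors M) fun a ha => ?_
  exact hT.isUnit_of_mem_nonZeroDivisors
    (map_nonZeroDivisors_le (N.map (algebraMap R A)) T ⟨a, ha, rfl⟩)

theorem IsStronglyPiRegular.nonempty_totalQuotient_ringEquiv [IsFractionRing R Q]
    (hQ : IsStronglyPiRegular Q) [Algebra Q T] [IsLocalization (Algebra.algebraMapSubmonoid Q M) T]
    [Algebra R T] [IsScalarTower R Q T] :
    Nonempty (TotalQuotient A ≃+* T) := by
  let _ : Algebra A T := (lift (M := M) (g := algebraMap R T) fun m => by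
    rw [IsScalarTower.algebraMap_apply R Q T]
    exact map_units T (⟨_, Submonoid.mem_map_of_mem _ m.2⟩ : Algebra.algebraMapSubmonoid Q M)
    ).toAlgebra
  have : IsScalarTower R A T := IsScalarTower.of_algebraMap_eq' (lift_comp _).symm
  have := hQ.isLocalization_nonZeroDivisors M (A := A) (T := T)
  exact ⟨(algEquiv (nonZeroDivisors A) (TotalQuotient A) T).toRingEquiv⟩

end TotalQuotient

theorem stmt_18 {R : Type*} [CommRing R]
    (hzero : IsZeroDimensional (TotalQuotient R))
    (P : Ideal R) (hP : P.IsPrime) :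
    Nonempty (TotalQuotient (Localization.AtPrime P) ≃+*
      Localization (Submonoid.map (algebraMap R (TotalQuotient R)).toMonoidHom
        P.primeCompl)) ∧
    (DCCPrincipal (TotalQuotient R) →
      DCCPrincipal (TotalQuotient (Localization.AtPrime P))) := by
  have hQ := hzero.isStronglyPiRegular
  let S := Algebra.algebraMapSubmonoid (TotalQuotient R) P.primeCompl
  have hequiv := hQ.nonempty_totalQuotient_ringEquiv P.primeCompl
    (A := Localization.AtPrime P) (T := Localization S)
  refine ⟨hequiv, fun hdcc => ?_⟩
  obtain ⟨e⟩ := hequiv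
  have hT : DCCPrincipal (Localization S) := hdcc.of_surjective _ (hQ.algebraMap_surjective S)
  exact hT.of_surjective e.symm.toRingHom e.symm.surjective
end

section
/- Let R be a commutative ring with finitely many minimal primes such that every zero-divisor lies in a minimal prime, and let I = (x_1,...,x_t)R be an ideal generated by a t-element sequence of height at least t > 0. Then there exist r_2,...,r_t ∈ R such that x := x_1 + r_2 x_2 + ··· + r_t x_t is a non-zero-divisor of R and I = (x, x_2, ..., x_t)R. -/
/-- The height of an ideal: the infimum of heights of primes containing it. -/
noncomputable def idealHeight {R : Type*} [CommRing R] (I : Ideal R) : ℕ∞ :=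
  ⨅ (P : PrimeSpectrum R) (_ : I ≤ P.asIdeal), Order.height P

/-- Coset prime avoidance: if `span {a} ⊔ J` is not contained in any prime of a finite
set, then some element `a + y` with `y ∈ J` avoids all the primes. -/
private lemma avoid_aux {R : Type*} [CommRing R] (s : Finset (Ideal R)) :
    (∀ P ∈ s, P.IsPrime) →
    ∀ (J : Ideal R) (a : R), (∀ P ∈ s, ¬ (a ∈ P ∧ J ≤ P)) →
    ∃ y ∈ J, ∀ P ∈ s, a + y ∉ P := by
  classical
  induction s using Finset.strongInduction with
  | _ s IH =>
    intro hprime J a hns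
    rcases s.eq_empty_or_nonempty with rfl | ⟨P₀, hP₀⟩
    · exact ⟨0, J.zero_mem, by simp⟩
    by_cases hcomp : ∃ P ∈ s, ∃ Q ∈ s, P ≠ Q ∧ P ≤ Q
    · obtain ⟨P, hP, Q, hQ, hne, hle⟩ := hcomp
      obtain ⟨y, hyJ, hy⟩ := IH (s.erase P) (Finset.erase_ssubset hP)
        (fun P' h => hprime P' (Finset.mem_of_mem_erase h)) J a
        (fun P' h => hns P' (Finset.mem_of_mem_erase h))
      refine ⟨y, hyJ, fun P' hP' => ?_⟩
      by_cases h : P' = P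
      · subst h
        exact fun hmem => hy Q (Finset.mem_erase.mpr ⟨hne.symm, hQ⟩) (hle hmem)
      · exact hy P' (Finset.mem_erase.mpr ⟨h, hP'⟩)
    · push_neg at hcomp
      obtain ⟨y, hyJ, hy⟩ := IH (s.erase P₀) (Finset.erase_ssubset hP₀)
        (fun P' h => hprime P' (Finset.mem_of_mem_erase h)) J a
        (fun P' h => hns P' (Finset.mem_of_mem_erase h))
      by_cases hmem : a + y ∈ P₀
      · have hP₀p : P₀.IsPrime := hprime P₀ hP₀
        have hJ : ¬ J ≤ P₀ := by
          intro hle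
          refine hns P₀ hP₀ ⟨?_, hle⟩
          have := P₀.sub_mem hmem (hle hyJ)
          simpa using this
        obtain ⟨u, huJ, huP⟩ := SetLike.not_le_iff_exists.mp hJ
        have hchoice : ∀ P ∈ s.erase P₀, ∃ p, p ∈ P ∧ p ∉ P₀ := by
          intro P hP
          have hne := (Finset.mem_erase.mp hP).1
          exact SetLike.not_le_iff_exists.mp
            (hcomp P (Finset.mem_of_mem_erase hP) P₀ hP₀ hne)
        choose! p hp1 hp2 using hchoice
        set q := ∏ P ∈ s.erase P₀, p P with hq
        have hqP : ∀ P ∈ s.erase P₀, q ∈ P := by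
          intro P hP
          rw [hq, ← Finset.prod_erase_mul _ _ hP]
          exact Ideal.mul_mem_left P _ (hp1 P hP)
        have hqP₀ : q ∉ P₀ := by
          rw [hq]
          intro h
          obtain ⟨P, hP, hPm⟩ := (Ideal.IsPrime.prod_mem_iff).mp h
          exact hp2 P hP hPm
        refine ⟨y + u * q, J.add_mem hyJ (J.mul_mem_right q huJ), fun P hP => ?_⟩
        by_cases h : P = P₀
        · subst h
          intro hc
          have : u * q ∈ P := by
            have := P.sub_mem hc hmem
            simpa [add_sub_add_left_eq_sub, sub_sub_cancel] using
              (show u * q ∈ P by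
                have h2 := P.sub_mem hc hmem
                rw [show a + (y + u * q) - (a + y) = u * q by ring] at h2
                exact h2)
          rcases hP₀p.mem_or_mem this with h' | h'
          · exact huP h'
          · exact hqP₀ h'
        · have hPe : P ∈ s.erase P₀ := Finset.mem_erase.mpr ⟨h, hP⟩
          intro hc
          apply hy P hPe
          have h2 := P.sub_mem hc (Ideal.mul_mem_left P u (hqP P hPe))
          rw [show a + (y + u * q) - u * q = a + y by ring] at h2
          exact h2
      · refine ⟨y, hyJ, fun P hP => ?_⟩
        by_cases h : P = P₀
        · subst h; exact hmem
        · exact hy P (Finset.mem_erase.mpr ⟨h, hP⟩)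

theorem stmt_19 {R : Type*} [CommRing R]
    (hfin : (minimalPrimes R).Finite)
    (hzd : ∀ r : R, r ∉ nonZeroDivisors R → ∃ P ∈ minimalPrimes R, r ∈ P)
    (t : ℕ) (ht : 0 < t) (x : Fin t → R)
    (I : Ideal R) (hI : I = Ideal.span (Set.range x))
    (hht : (t : ℕ∞) ≤ idealHeight I) :
    ∃ r : Fin t → R, r ⟨0, ht⟩ = 1 ∧
      (∑ i, r i * x i) ∈ nonZeroDivisors R ∧
      I = Ideal.span (insert (∑ i, r i * x i) (x '' {i | i ≠ ⟨0, ht⟩})) := by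
  classical
  set i0 : Fin t := ⟨0, ht⟩ with hi0
  set a : R := x i0 with ha
  set S : Set R := x '' {i | i ≠ i0} with hS
  set J : Ideal R := Ideal.span S with hJ
  -- I = span {a} ⊔ J
  have hrange : Set.range x = insert a S := by
    ext r
    constructor
    · rintro ⟨i, rfl⟩
      by_cases h : i = i0
      · subst h; exact Set.mem_insert _ _
      · exact Set.mem_insert_of_mem _ ⟨i, h, rfl⟩
    · rintro (rfl | ⟨i, _, rfl⟩) <;> exact ⟨_, rfl⟩
  have hIsplit : I = Ideal.span {a} ⊔ J := by
    rw [hI, hrange, Ideal.span_insert]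
  -- I is not contained in any minimal prime
  have hnotle : ∀ P ∈ minimalPrimes R, ¬ I ≤ P := by
    intro P hP hle
    have hprime : P.IsPrime := hP.1.1
    have hmin : IsMin (⟨P, hprime⟩ : PrimeSpectrum R) := by
      intro Q hQ
      exact hP.2 ⟨Q.2, bot_le⟩ hQ
    have h0 : Order.height (⟨P, hprime⟩ : PrimeSpectrum R) = 0 :=
      Order.height_eq_zero.mpr hmin
    have : idealHeight I ≤ 0 := by
      refine le_trans (iInf_le _ (⟨P, hprime⟩ : PrimeSpectrum R)) ?_
      exact le_trans (iInf_le _ hle) (le_of_eq h0)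
    have ht0 : (t : ℕ∞) ≤ 0 := le_trans hht this
    simp only [nonpos_iff_eq_zero, Nat.cast_eq_zero] at ht0
    omega
  -- apply prime avoidance
  obtain ⟨y, hyJ, hy⟩ := avoid_aux hfin.toFinset
    (fun P hP => (hfin.mem_toFinset.mp hP).1.1) J a
    (fun P hP hc => by
      refine hnotle P (hfin.mem_toFinset.mp hP) ?_
      rw [hIsplit]
      exact sup_le ((Ideal.span_singleton_le_iff_mem P).mpr hc.1) hc.2)
  have hy' : ∀ P ∈ minimalPrimes R, a + y ∉ P :=
    fun P hP => hy P (hfin.mem_toFinset.mpr hP)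
  -- write y as a combination of the x i, i ≠ i0
  have hSrange : S = Set.range (fun j : {i : Fin t // i ≠ i0} => x j) := by
    ext r
    constructor
    · rintro ⟨i, hi, rfl⟩; exact ⟨⟨i, hi⟩, rfl⟩
    · rintro ⟨⟨i, hi⟩, rfl⟩; exact ⟨i, hi, rfl⟩
  have hymem : y ∈ Ideal.span (Set.range (fun j : {i : Fin t // i ≠ i0} => x j)) := by
    rwa [← hSrange]
  obtain ⟨c, hc⟩ := (Submodule.mem_span_range_iff_exists_fun R).mp hymem
  -- define the coefficients
  refine ⟨fun i => if h : i = i0 then 1 else c ⟨i, h⟩, by simp, ?_, ?_⟩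
  all_goals
    have hsum : (∑ i, (if h : i = i0 then (1 : R) else c ⟨i, h⟩) * x i) = a + y := by
      rw [Fintype.sum_eq_add_sum_compl i0]
      simp only [dif_pos, one_mul]
      congr 1
      rw [← hc]
      rw [Finset.sum_subtype (p := fun i => i ≠ i0) {i0}ᶜ (by simp)]
      apply Finset.sum_congr rfl
      intro j _
      rw [dif_neg j.2]
      rfl
  · rw [hsum]
    by_contra hnz
    obtain ⟨P, hP, hmem⟩ := hzd _ hnz
    exact hy' P hP hmem
  · rw [hsum, hIsplit, Ideal.span_insert]
    show Ideal.span {a} ⊔ J = Ideal.span {a + y} ⊔ J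
    have h1 : Ideal.span {a} ≤ Ideal.span {a + y} ⊔ J := by
      rw [Ideal.span_singleton_le_iff_mem]
      have h := Submodule.sub_mem (Ideal.span {a + y} ⊔ J)
        (Submodule.mem_sup_left (Ideal.subset_span rfl))
        (Submodule.mem_sup_right hyJ)
      simpa using h
    have h2 : Ideal.span {a + y} ≤ Ideal.span {a} ⊔ J := by
      rw [Ideal.span_singleton_le_iff_mem]
      exact Submodule.add_mem _ (Submodule.mem_sup_left (Ideal.subset_span rfl))
        (Submodule.mem_sup_right hyJ)
    exact le_antisymm (sup_le h1 le_sup_right) (sup_le h2 le_sup_right)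
end
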